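/- arXiv:1703.07632 — 3 statements merged into one kernel-verified Lean document; each statement's English description precedes it below -/
import Mathlib

section
/- Let A be an n×n complex matrix and suppose one Geršgorin disc D_i is disjoint from the union of all other Geršgorin discs D_j, j≠i. Then D_i contains exactly one eigenvalue of A (counted with algebraic multiplicity). -/
/-!
Scale the off-diagonal entries of `A` by `t ∈ [0, 1]`. The Geršgorin discs only shrink along this
path, so every eigenvalue stays in the isolated disc `K` or in the union `L` of the other discs.
For monic polynomials of degree `n` whose roots avoid the gap between the disjoint compact sets `K`
and `L`, the number of roots in `K` is locally constant in the coefficients: having exactly `c`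
roots in `K` means lying in the image of a compact set of root tuples (`c` of them in `K`, the rest
in `L`), a closed condition, and there are only finitely many values of `c`. At `t = 0` the
eigenvalues are the diagonal entries, exactly one of which lies in `K`.
-/

open Polynomial Finset

theorem Multiset.exists_eq_map_univ_val_fin {α : Type*} {s : Multiset α} {n : ℕ}
    (h : Multiset.card s = n) : ∃ w : Fin n → α, s = univ.val.map w := by
  classical
  let e : s ≃ Fin n := Fintype.equivFinOfCardEq (by rw [Multiset.card_coe, h])
  refine ⟨(fun x : s => (x : α)) ∘ e.symm, ?_⟩
  rw [← Multiset.map_map, Multiset.map_univ_val_equiv, Multiset.map_univ_coe]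

theorem Matrix.continuous_charpoly_coeff {R ι : Type*} [CommRing R] [TopologicalSpace R]
    [IsTopologicalRing R] [Fintype ι] [DecidableEq ι] (k : ℕ) :
    Continuous fun M : Matrix ι ι R => M.charpoly.coeff k := by
  have h (M : Matrix ι ι R) : M.charpoly.coeff k =
      MvPolynomial.eval₂Hom (RingHom.id R) (fun p : ι × ι => M p.1 p.2)
        ((Matrix.charpoly.univ R ι).coeff k) := by
    rw [Matrix.charpoly.univ_coeff_eval₂Hom]; rfl
  simp only [h]
  exact (MvPolynomial.continuous_eval _).comp (continuous_pi fun p => continuous_apply_apply _ _)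

namespace Polynomial

variable {R ι : Type*} [Fintype ι]

theorem roots_prod_univ_X_sub_C [CommRing R] [IsDomain R] (w : ι → R) :
    (∏ j, (X - C (w j))).roots = univ.val.map w := by
  rw [← roots_multiset_prod_X_sub_C (univ.val.map w), Multiset.map_map]
  rfl

theorem card_filter_roots_prod_univ_X_sub_C [CommRing R] [IsDomain R] (w : ι → R)
    (P : R → Prop) [DecidablePred P] :
    ((∏ j, (X - C (w j))).roots.filter P).card = #{j | P (w j)} := by
  rw [roots_prod_univ_X_sub_C, ← Multiset.countP_eq_card_filter, Multiset.countP_map]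
  rfl

theorem Splits.exists_eq_prod_univ_X_sub_C [Field R] {p : R[X]} {n : ℕ} (hs : p.Splits)
    (hm : p.Monic) (hd : p.natDegree = n) : ∃ w : Fin n → R, p = ∏ j, (X - C (w j)) := by
  obtain ⟨w, hw⟩ := Multiset.exists_eq_map_univ_val_fin (hd ▸ hs.natDegree_eq_card_roots.symm)
  refine ⟨w, ?_⟩
  rw [hs.eq_prod_roots_of_monic hm, hw, Multiset.map_map]
  rfl

theorem continuous_coeff_prod_univ_X_sub_C [CommRing R] [TopologicalSpace R]
    [IsTopologicalRing R] (k : ℕ) :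
    Continuous fun w : ι → R => (∏ j, (X - C (w j))).coeff k := by
  classical
  simp only [← Matrix.charpoly_diagonal]
  exact (Matrix.continuous_charpoly_coeff k).comp continuous_id.matrix_diagonal

end Polynomial

theorem continuous_of_finite_range_of_isClosed_preimage_singleton {X Y : Type*}
    [TopologicalSpace X] [TopologicalSpace Y] [DiscreteTopology Y] {f : X → Y}
    (hfin : (Set.range f).Finite) (hclosed : ∀ y, IsClosed (f ⁻¹' {y})) : Continuous f := by
  refine continuous_iff_isClosed.mpr fun s _ => ?_
  have : f ⁻¹' s = ⋃ y ∈ s ∩ Set.range f, f ⁻¹' {y} := by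
    ext x; simp
  rw [this]
  exact (hfin.subset Set.inter_subset_right).isClosed_biUnion fun y _ => hclosed y

section RootCount

variable {𝕜 T : Type*} [Field 𝕜] [IsAlgClosed 𝕜] {n : ℕ} {K L : Set 𝕜}
  [DecidablePred (· ∈ K)]

theorem card_filter_roots_eq_iff_exists_eq_prod (hKL : Disjoint K L) {q : 𝕜[X]} (hq : q.Monic)
    (hdeg : q.natDegree = n) (hroots : ∀ z ∈ q.roots, z ∈ K ∪ L) (c : ℕ) :
    (q.roots.filter (· ∈ K)).card = c ↔ ∃ s : Finset (Fin n), #s = c ∧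
      ∃ w ∈ Set.univ.pi (fun j => if j ∈ s then K else L), q = ∏ j, (X - C (w j)) := by
  constructor
  · rintro rfl
    obtain ⟨w, rfl⟩ := (IsAlgClosed.splits q).exists_eq_prod_univ_X_sub_C hq hdeg
    refine ⟨univ.filter (w · ∈ K), (card_filter_roots_prod_univ_X_sub_C w _).symm, w, ?_,
      rfl⟩
    intro j _
    have hwj : w j ∈ K ∪ L := hroots _ (by simp [roots_prod_univ_X_sub_C])
    by_cases hj : w j ∈ K
    · simp [hj]
    · simpa [hj] using hwj.resolve_left hj
  · rintro ⟨s, rfl, w, hw, rfl⟩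
    rw [card_filter_roots_prod_univ_X_sub_C]
    congr 1
    ext j
    have hwj := hw j (Set.mem_univ j)
    by_cases hj : j ∈ s
    · simpa [hj] using hwj
    · simp only [hj, if_false] at hwj
      simpa [hj] using hKL.notMem_of_mem_right hwj

variable [TopologicalSpace 𝕜] [IsTopologicalRing 𝕜] [T2Space 𝕜] [TopologicalSpace T]
  {p : T → 𝕜[X]}

theorem isClosed_setOf_card_filter_roots_eq (hK : IsCompact K) (hL : IsCompact L)
    (hKL : Disjoint K L) (hcont : ∀ k, Continuous fun x => (p x).coeff k)
    (hmonic : ∀ x, (p x).Monic) (hdeg : ∀ x, (p x).natDegree = n)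
    (hroots : ∀ x, ∀ z ∈ (p x).roots, z ∈ K ∪ L) (c : ℕ) :
    IsClosed {x | ((p x).roots.filter (· ∈ K)).card = c} := by
  let coeffs (q : 𝕜[X]) : ℕ → 𝕜 := fun k => q.coeff k
  have hset : {x | ((p x).roots.filter (· ∈ K)).card = c} =
      ⋃ s ∈ {s : Finset (Fin n) | #s = c}, (fun x => coeffs (p x)) ⁻¹'
        ((fun w : Fin n → 𝕜 => coeffs (∏ j, (X - C (w j)))) ''
          Set.univ.pi (fun j => if j ∈ s then K else L)) := by
    ext x
    simp only [Set.mem_ofPred_eq, card_filter_roots_eq_iff_exists_eq_prod hKL (hmonic x) (hdeg x)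
      (hroots x), Set.mem_iUnion, Set.mem_preimage, Set.mem_image, exists_prop, coeffs,
      funext_iff, ← Polynomial.ext_iff, eq_comm (a := p x)]
  rw [hset]
  refine (Set.toFinite _).isClosed_biUnion fun s _ => IsClosed.preimage (continuous_pi hcont) ?_
  refine (IsCompact.image ?_ (continuous_pi fun k => continuous_coeff_prod_univ_X_sub_C k)).isClosed
  exact isCompact_univ_pi fun j => by split_ifs <;> assumption

theorem card_filter_roots_eq_of_preconnectedSpace [PreconnectedSpace T] (hK : IsCompact K)
    (hL : IsCompact L) (hKL : Disjoint K L) (hcont : ∀ k, Continuous fun x => (p x).coeff k)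
    (hmonic : ∀ x, (p x).Monic) (hdeg : ∀ x, (p x).natDegree = n)
    (hroots : ∀ x, ∀ z ∈ (p x).roots, z ∈ K ∪ L) (x y : T) :
    ((p x).roots.filter (· ∈ K)).card = ((p y).roots.filter (· ∈ K)).card := by
  have hbound (x : T) : ((p x).roots.filter (· ∈ K)).card ≤ n :=
    (Multiset.card_le_card (Multiset.filter_le _ _)).trans (hdeg x ▸ card_roots' _)
  exact PreconnectedSpace.constant ‹_› <|
    continuous_of_finite_range_of_isClosed_preimage_singleton
      ((Set.finite_Iic n).subset (Set.range_subset_iff.mpr hbound))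
      (isClosed_setOf_card_filter_roots_eq hK hL hKL hcont hmonic hdeg hroots)

end RootCount

namespace Matrix

variable {𝕜 ι : Type*} [DecidableEq ι]

def scaleOffDiag [Mul 𝕜] (t : 𝕜) (A : Matrix ι ι 𝕜) : Matrix ι ι 𝕜 :=
  of fun k l => if k = l then A k k else t * A k l

@[simp]
theorem scaleOffDiag_apply_self [Mul 𝕜] (t : 𝕜) (A : Matrix ι ι 𝕜) (k : ι) :
    scaleOffDiag t A k k = A k k := by
  simp [scaleOffDiag]

theorem scaleOffDiag_one [MulOneClass 𝕜] (A : Matrix ι ι 𝕜) : scaleOffDiag 1 A = A := by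
  ext k l; by_cases h : k = l <;> simp [scaleOffDiag, h]

theorem scaleOffDiag_zero [MulZeroClass 𝕜] (A : Matrix ι ι 𝕜) :
    scaleOffDiag 0 A = diagonal A.diag := by
  ext k l; by_cases h : k = l <;> simp [scaleOffDiag, h]

theorem norm_scaleOffDiag_apply_le [SeminormedRing 𝕜] (A : Matrix ι ι 𝕜) {t : 𝕜}
    (ht : ‖t‖ ≤ 1) (k l : ι) : ‖scaleOffDiag t A k l‖ ≤ ‖A k l‖ := by
  by_cases h : k = l
  · simp [scaleOffDiag, h]
  · simp only [scaleOffDiag, of_apply, h, if_false]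
    exact (norm_mul_le _ _).trans (mul_le_of_le_one_left (norm_nonneg _) ht)

theorem continuous_scaleOffDiag [Mul 𝕜] [TopologicalSpace 𝕜] [ContinuousMul 𝕜]
    (A : Matrix ι ι 𝕜) : Continuous fun t : 𝕜 => scaleOffDiag t A :=
  continuous_pi fun k => continuous_pi fun l => by
    simp only [scaleOffDiag, of_apply]
    split_ifs <;> fun_prop

variable [Fintype ι]

def gershgorinDisc [NormedField 𝕜] (A : Matrix ι ι 𝕜) (k : ι) : Set 𝕜 :=
  Metric.closedBall (A k k) (∑ j ∈ univ.erase k, ‖A k j‖)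

section NormedField

variable [NormedField 𝕜]

theorem diag_mem_gershgorinDisc (A : Matrix ι ι 𝕜) (k : ι) : A k k ∈ A.gershgorinDisc k :=
  Metric.mem_closedBall_self (sum_nonneg fun j _ => norm_nonneg (A k j))

theorem isCompact_gershgorinDisc [ProperSpace 𝕜] (A : Matrix ι ι 𝕜) (k : ι) :
    IsCompact (A.gershgorinDisc k) :=
  isCompact_closedBall _ _

theorem exists_mem_gershgorinDisc_of_isRoot_charpoly_of_norm_le {A B : Matrix ι ι 𝕜}
    (hdiag : ∀ k, B k k = A k k) (hle : ∀ k l, ‖B k l‖ ≤ ‖A k l‖) {z : 𝕜}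
    (hz : B.charpoly.IsRoot z) : ∃ k, z ∈ A.gershgorinDisc k := by
  rw [← charpoly_toLin', ← Module.End.hasEigenvalue_iff_isRoot_charpoly] at hz
  obtain ⟨k, hk⟩ := eigenvalue_mem_ball hz
  rw [mem_closedBall_iff_norm, hdiag] at hk
  exact ⟨k, mem_closedBall_iff_norm.mpr (hk.trans (sum_le_sum fun j _ => hle k j))⟩

theorem filter_diag_mem_biUnion_gershgorinDisc (A : Matrix ι ι 𝕜) {s : Finset ι}
    [DecidablePred (· ∈ ⋃ k ∈ s, A.gershgorinDisc k)]
    (hsep : Disjoint (⋃ k ∈ s, A.gershgorinDisc k) (⋃ k ∈ sᶜ, A.gershgorinDisc k)) :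
    ({k | A k k ∈ ⋃ k ∈ s, A.gershgorinDisc k} : Finset ι) = s := by
  ext k
  rw [mem_filter]
  refine ⟨fun hk => ?_,
    fun hk => ⟨mem_univ k, Set.mem_biUnion hk (A.diag_mem_gershgorinDisc k)⟩⟩
  by_contra hks
  exact hsep.notMem_of_mem_left hk.2
    (Set.mem_biUnion (mem_compl.mpr hks) (A.diag_mem_gershgorinDisc k))

end NormedField

open Classical in
theorem card_filter_roots_charpoly_mem_biUnion_gershgorinDisc (A : Matrix ι ι ℂ) {s : Finset ι}
    (hsep : Disjoint (⋃ k ∈ s, A.gershgorinDisc k) (⋃ k ∈ sᶜ, A.gershgorinDisc k)) :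
    (A.charpoly.roots.filter (· ∈ ⋃ k ∈ s, A.gershgorinDisc k)).card = #s := by
  have hroots (t : unitInterval) : ∀ z ∈ (A.scaleOffDiag (t : ℂ)).charpoly.roots,
      z ∈ (⋃ k ∈ s, A.gershgorinDisc k) ∪ ⋃ k ∈ sᶜ, A.gershgorinDisc k := by
    intro z hz
    have ht : ‖((t : ℝ) : ℂ)‖ ≤ 1 := by
      rw [Complex.norm_real, Real.norm_of_nonneg t.2.1]; exact t.2.2
    obtain ⟨k, hk⟩ := exists_mem_gershgorinDisc_of_isRoot_charpoly_of_norm_le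
      (A.scaleOffDiag_apply_self _) (A.norm_scaleOffDiag_apply_le ht) (isRoot_of_mem_roots hz)
    by_cases hks : k ∈ s
    · exact Or.inl (Set.mem_biUnion hks hk)
    · exact Or.inr (Set.mem_biUnion (mem_compl.mpr hks) hk)
  have key := card_filter_roots_eq_of_preconnectedSpace
    (p := fun t : unitInterval => (A.scaleOffDiag (t : ℂ)).charpoly)
    (isCompact_biUnion _ fun k _ => A.isCompact_gershgorinDisc k)
    (isCompact_biUnion _ fun k _ => A.isCompact_gershgorinDisc k) hsep
    (fun k => (continuous_charpoly_coeff k).comp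
      (A.continuous_scaleOffDiag.comp (Complex.continuous_ofReal.comp continuous_subtype_val)))
    (fun t => charpoly_monic _) (fun t => charpoly_natDegree_eq_dim _) hroots 1 0
  simp only [Set.Icc.coe_one, Set.Icc.coe_zero, Complex.ofReal_one, Complex.ofReal_zero,
    scaleOffDiag_one, scaleOffDiag_zero, charpoly_diagonal,
    card_filter_roots_prod_univ_X_sub_C, diag_apply] at key
  rw [key, filter_diag_mem_biUnion_gershgorinDisc A hsep]

end Matrix

/-- If one Geršgorin disc of a complex matrix is disjoint from all the other discs,
then it contains exactly one eigenvalue, counted with algebraic multiplicity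
(as a root of the characteristic polynomial). -/
theorem gershgorin_isolated_disc_unique_eigenvalue {n : ℕ} (A : Matrix (Fin n) (Fin n) ℂ)
    (i : Fin n)
    (hdisj : ∀ z : ℂ, ‖z - A i i‖ ≤ ∑ j ∈ Finset.univ \ {i}, ‖A i j‖ →
      ∀ k : Fin n, k ≠ i →
        ¬ (‖z - A k k‖ ≤ ∑ j ∈ Finset.univ \ {k}, ‖A k j‖)) :
    (A.charpoly.roots.filter
      (fun z => ‖z - A i i‖ ≤ ∑ j ∈ Finset.univ \ {i}, ‖A i j‖)).card
      = 1 := by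
  have hdisc (k : Fin n) :
      A.gershgorinDisc k = {z | ‖z - A k k‖ ≤ ∑ j ∈ Finset.univ \ {k}, ‖A k j‖} := by
    ext z
    rw [Matrix.gershgorinDisc, mem_closedBall_iff_norm, sdiff_singleton_eq_erase]
    rfl
  have hsep : Disjoint (⋃ k ∈ ({i} : Finset (Fin n)), A.gershgorinDisc k)
      (⋃ k ∈ ({i} : Finset (Fin n))ᶜ, A.gershgorinDisc k) := by
    rw [set_biUnion_singleton, hdisc, Set.disjoint_left]
    intro z hz hz'
    obtain ⟨k, hk, hzk⟩ := Set.mem_iUnion₂.mp hz'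
    exact hdisj z hz k (by simpa using hk) (by rwa [hdisc] at hzk)
  have hcount := A.card_filter_roots_charpoly_mem_biUnion_gershgorinDisc hsep
  rw [set_biUnion_singleton, hdisc, card_singleton] at hcount
  convert hcount using 2
  exact Multiset.filter_congr fun _ _ => Iff.rfl
end

section
/- For n ≥ 1 and g ≥ 3, let A be the g×g symmetric real matrix which is tridiagonal with diagonal entries (1, 2, 2, …, 2, 2+16n², 2) and off-diagonal entries all equal to 1 except the entry in positions (g−1,g) and (g,g−1), which equals 1+4n. Then the largest eigenvalue μ of A satisfies 16n² − 4n ≤ μ ≤ 16n² + 4n + 4. -/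
open Matrix Finset

/-- Every diagonal entry of a real symmetric matrix is at most any upper bound of its
spectrum. -/
lemma diag_le_spectrum_bound {g : ℕ} (A : Matrix (Fin g) (Fin g) ℝ) (hsym : A.IsHermitian)
    (μ : ℝ) (hmax : ∀ ν ∈ spectrum ℝ A, ν ≤ μ) (i : Fin g) : A i i ≤ μ := by
  classical
  have heig : ∀ k, hsym.eigenvalues k ≤ μ := fun k =>
    hmax _ (hsym.eigenvalues_mem_spectrum_real k)
  set U : Matrix (Fin g) (Fin g) ℝ := (hsym.eigenvectorUnitary : Matrix (Fin g) (Fin g) ℝ)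
    with hU
  have hUU : U * star U = 1 := (Matrix.mem_unitaryGroup_iff).mp hsym.eigenvectorUnitary.2
  have hrow : ∑ k, U i k * U i k = 1 := by
    simpa [Matrix.mul_apply, Matrix.star_apply] using congrFun (congrFun hUU i) i
  have hAi : A i i = ∑ k, hsym.eigenvalues k * (U i k * U i k) := by
    conv_lhs => rw [hsym.spectral_theorem]
    simp [Matrix.mul_apply, Matrix.diagonal_apply, Finset.sum_mul, Matrix.star_apply]
    apply Finset.sum_congr rfl
    intro k _
    simp [hU, Matrix.IsHermitian.eigenvectorUnitary_apply]
    ring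
  calc A i i = ∑ k, hsym.eigenvalues k * (U i k * U i k) := hAi
    _ ≤ ∑ k, μ * (U i k * U i k) :=
        Finset.sum_le_sum fun k _ => mul_le_mul_of_nonneg_right (heig k) (mul_self_nonneg _)
    _ = μ := by rw [← Finset.mul_sum, hrow, mul_one]

/-- For `n ≥ 1`, `g ≥ 3`, the largest eigenvalue `μ` of the tridiagonal symmetric matrix
`N Nᵀ` with diagonal `(1, 2, …, 2, 2+16n², 2)` and off-diagonal entries `1` except the
entry `1 + 4n` in positions `(g−1, g)` and `(g, g−1)` satisfies
`16n² − 4n ≤ μ ≤ 16n² + 4n + 4`. -/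
theorem largest_eigenvalue_bounds (g n : ℕ) (hg : 3 ≤ g) (hn : 1 ≤ n)
    (A : Matrix (Fin g) (Fin g) ℝ)
    (hA : ∀ i j : Fin g, A i j =
      if i = j then
        (if i.val = 0 then 1 else if i.val = g - 2 then 2 + 16 * n ^ 2 else 2)
      else if i.val + 1 = j.val ∨ j.val + 1 = i.val then
        (if (i.val = g - 2 ∧ j.val = g - 1) ∨ (i.val = g - 1 ∧ j.val = g - 2)
          then 1 + 4 * n else 1)
      else 0)
    (μ : ℝ) (hμ : μ ∈ spectrum ℝ A) (hmax : ∀ ν ∈ spectrum ℝ A, ν ≤ μ) :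
    16 * n ^ 2 - 4 * n ≤ μ ∧ μ ≤ 16 * n ^ 2 + 4 * n + 4 := by
  have hn' : (1 : ℝ) ≤ (n : ℝ) := by exact_mod_cast hn
  -- A is symmetric
  have hsym : A.IsHermitian := by
    ext i j
    simp only [conjTranspose_apply, star_trivial]
    rw [hA i j, hA j i]
    by_cases h : i = j
    · subst h; rfl
    · rw [if_neg (fun hh => h hh.symm), if_neg h]
      split_ifs <;> first | rfl | tauto
  constructor
  · -- lower bound via the large diagonal entry
    have hd : A ⟨g - 2, by omega⟩ ⟨g - 2, by omega⟩ = 2 + 16 * (n : ℝ) ^ 2 := by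
      rw [hA, if_pos rfl, if_neg (show ¬ (g - 2 = 0) by omega),
        if_pos rfl]
      push_cast; ring
    have := diag_le_spectrum_bound A hsym μ hmax ⟨g - 2, by omega⟩
    rw [hd] at this
    nlinarith
  · -- upper bound via Gershgorin
    have hμ' : Module.End.HasEigenvalue (Matrix.toLin' A) μ := by
      apply Module.End.HasEigenvalue.of_mem_spectrum
      rwa [show Matrix.toLin' A = Matrix.toLinAlgEquiv' A from rfl, AlgEquiv.spectrum_eq]
    obtain ⟨k, hk⟩ := eigenvalue_mem_ball hμ'
    rw [Metric.mem_closedBall, Real.dist_eq] at hk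
    have hk' : μ ≤ A k k + ∑ j ∈ univ.erase k, ‖A k j‖ := by
      have := (abs_le.mp hk).2; linarith
    -- compute / bound the Gershgorin row sums
    have key : A k k + ∑ j ∈ univ.erase k, ‖A k j‖ ≤ 16 * n ^ 2 + 4 * n + 4 := by
      have hklt := k.isLt
      rcases Nat.lt_or_ge k.val (g - 2) with hkv | hkv
      · -- k.val < g - 2 : diagonal ≤ 2 and off-diagonal entries are 1's
        have hdiag : A k k ≤ 2 := by
          rw [hA, if_pos rfl]
          rcases Nat.eq_zero_or_pos k.val with h0 | h0
          · rw [if_pos h0]; norm_num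
          · rw [if_neg (by omega), if_neg (by omega)]; norm_num
        rcases Nat.eq_zero_or_pos k.val with hk0 | hk0
        · -- first row : single neighbour with entry 1
          have hsum : ∑ j ∈ univ.erase k, ‖A k j‖ = ‖A k ⟨1, by omega⟩‖ := by
            apply Finset.sum_eq_single_of_mem
            · exact Finset.mem_erase.mpr
                ⟨Fin.ne_of_val_ne (show (1 : ℕ) ≠ k.val by omega), Finset.mem_univ _⟩
            · intro c hc hcne
              rw [Finset.mem_erase] at hc
              have h1 : k.val ≠ c.val := Fin.val_ne_of_ne (Ne.symm hc.1)
              have h2 : c.val ≠ 1 := Fin.val_ne_of_ne hcne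
              rw [hA, if_neg (Fin.ne_of_val_ne h1), if_neg (by omega)]
              simp
          have hval : A k ⟨1, by omega⟩ = 1 := by
            rw [hA, if_neg (Fin.ne_of_val_ne (show k.val ≠ 1 by omega)),
              if_pos (Or.inl (show k.val + 1 = 1 by omega)),
              if_neg (show ¬ ((k.val = g - 2 ∧ 1 = g - 1) ∨ (k.val = g - 1 ∧ 1 = g - 2))
                by omega)]
            norm_num
          rw [hsum, hval]
          simp only [norm_one]
          nlinarith
        · -- middle row : two neighbours with entries 1
          have hsum : ∑ j ∈ univ.erase k, ‖A k j‖ =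
              ‖A k ⟨k.val - 1, by omega⟩‖ + ‖A k ⟨k.val + 1, by omega⟩‖ := by
            apply Finset.sum_eq_add_of_mem
            · exact Finset.mem_erase.mpr
                ⟨Fin.ne_of_val_ne (show k.val - 1 ≠ k.val by omega), Finset.mem_univ _⟩
            · exact Finset.mem_erase.mpr
                ⟨Fin.ne_of_val_ne (show k.val + 1 ≠ k.val by omega), Finset.mem_univ _⟩
            · exact Fin.ne_of_val_ne (show k.val - 1 ≠ k.val + 1 by omega)
            · intro c hc hcne
              rw [Finset.mem_erase] at hc
              have h1 : k.val ≠ c.val := Fin.val_ne_of_ne (Ne.symm hc.1)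
              have h2 : c.val ≠ k.val - 1 := Fin.val_ne_of_ne hcne.1
              have h3 : c.val ≠ k.val + 1 := Fin.val_ne_of_ne hcne.2
              rw [hA, if_neg (Fin.ne_of_val_ne h1), if_neg (by omega)]
              simp
          have hval1 : A k ⟨k.val - 1, by omega⟩ = 1 := by
            rw [hA, if_neg (Fin.ne_of_val_ne (show k.val ≠ k.val - 1 by omega)),
              if_pos (Or.inr (show (k.val - 1) + 1 = k.val by omega)),
              if_neg (show ¬ ((k.val = g - 2 ∧ k.val - 1 = g - 1) ∨
                (k.val = g - 1 ∧ k.val - 1 = g - 2)) by omega)]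
            norm_num
          have hval2 : A k ⟨k.val + 1, by omega⟩ = 1 := by
            rw [hA, if_neg (Fin.ne_of_val_ne (show k.val ≠ k.val + 1 by omega)),
              if_pos (Or.inl (show k.val + 1 = k.val + 1 by omega)),
              if_neg (show ¬ ((k.val = g - 2 ∧ k.val + 1 = g - 1) ∨
                (k.val = g - 1 ∧ k.val + 1 = g - 2)) by omega)]
            norm_num
          rw [hsum, hval1, hval2]
          simp only [norm_one]
          nlinarith
      · rcases Nat.lt_or_ge k.val (g - 1) with hkv2 | hkv2
        · -- k.val = g - 2 : the big row
          have hkeq : k.val = g - 2 := by omega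
          have hdiag : A k k = 2 + 16 * (n : ℝ) ^ 2 := by
            rw [hA, if_pos rfl, if_neg (by omega), if_pos hkeq]
            push_cast; ring
          have hsum : ∑ j ∈ univ.erase k, ‖A k j‖ =
              ‖A k ⟨g - 3, by omega⟩‖ + ‖A k ⟨g - 1, by omega⟩‖ := by
            apply Finset.sum_eq_add_of_mem
            · exact Finset.mem_erase.mpr
                ⟨Fin.ne_of_val_ne (show g - 3 ≠ k.val by omega), Finset.mem_univ _⟩
            · exact Finset.mem_erase.mpr
                ⟨Fin.ne_of_val_ne (show g - 1 ≠ k.val by omega), Finset.mem_univ _⟩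
            · exact Fin.ne_of_val_ne (show g - 3 ≠ g - 1 by omega)
            · intro c hc hcne
              rw [Finset.mem_erase] at hc
              have h1 : k.val ≠ c.val := Fin.val_ne_of_ne (Ne.symm hc.1)
              have h2 : c.val ≠ g - 3 := Fin.val_ne_of_ne hcne.1
              have h3 : c.val ≠ g - 1 := Fin.val_ne_of_ne hcne.2
              have hcl := c.isLt
              rw [hA, if_neg (Fin.ne_of_val_ne h1), if_neg (by omega)]
              simp
          have hval1 : A k ⟨g - 3, by omega⟩ = 1 := by
            rw [hA, if_neg (Fin.ne_of_val_ne (show k.val ≠ g - 3 by omega)),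
              if_pos (Or.inr (show (g - 3) + 1 = k.val by omega)),
              if_neg (show ¬ ((k.val = g - 2 ∧ g - 3 = g - 1) ∨
                (k.val = g - 1 ∧ g - 3 = g - 2)) by omega)]
            norm_num
          have hval2 : A k ⟨g - 1, by omega⟩ = 1 + 4 * (n : ℝ) := by
            rw [hA, if_neg (Fin.ne_of_val_ne (show k.val ≠ g - 1 by omega)),
              if_pos (Or.inl (show k.val + 1 = g - 1 by omega)),
              if_pos (Or.inl ⟨hkeq, rfl⟩)]
            push_cast; ring
          rw [hsum, hval1, hval2, hdiag]
          rw [Real.norm_eq_abs, Real.norm_eq_abs, abs_of_nonneg (by norm_num : (0:ℝ) ≤ 1),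
            abs_of_nonneg (by nlinarith : (0:ℝ) ≤ 1 + 4 * (n:ℝ))]
          nlinarith
        · -- k.val = g - 1 : last row, single neighbour 1 + 4n
          have hkeq : k.val = g - 1 := by omega
          have hdiag : A k k = 2 := by
            rw [hA, if_pos rfl, if_neg (by omega), if_neg (by omega)]
            norm_num
          have hsum : ∑ j ∈ univ.erase k, ‖A k j‖ = ‖A k ⟨g - 2, by omega⟩‖ := by
            apply Finset.sum_eq_single_of_mem
            · exact Finset.mem_erase.mpr
                ⟨Fin.ne_of_val_ne (show g - 2 ≠ k.val by omega), Finset.mem_univ _⟩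
            · intro c hc hcne
              rw [Finset.mem_erase] at hc
              have h1 : k.val ≠ c.val := Fin.val_ne_of_ne (Ne.symm hc.1)
              have h2 : c.val ≠ g - 2 := Fin.val_ne_of_ne hcne
              have hcl := c.isLt
              rw [hA, if_neg (Fin.ne_of_val_ne h1), if_neg (by omega)]
              simp
          have hval : A k ⟨g - 2, by omega⟩ = 1 + 4 * (n : ℝ) := by
            rw [hA, if_neg (Fin.ne_of_val_ne (show k.val ≠ g - 2 by omega)),
              if_pos (Or.inr (show (g - 2) + 1 = k.val by omega)),
              if_pos (Or.inr ⟨hkeq, rfl⟩)]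
            push_cast; ring
          rw [hsum, hval, hdiag, Real.norm_eq_abs,
            abs_of_nonneg (by nlinarith : (0:ℝ) ≤ 1 + 4 * (n:ℝ))]
          nlinarith
    linarith
end

section
/- Let A be the Seifert matrix of the torus knot T(2,2g+1): the 2g×2g matrix with A_{ii} = −1, A_{i,i+1} = 1, and all other entries 0. Then A − Aᵀ is invertible (it is a symplectic intersection form up to sign), and the monodromy matrix M = A⁻ᵀA satisfies M^{2(2g+1)} = I, i.e., M is periodic. -/
/-!
The map `subLast : w ↦ (w i - w n)ᵢ` identifies `R^(n+1)` modulo constant vectors with `R^n`.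
The Seifert matrix `A` acts on `subLast w` as the forward difference of `w` and `Aᵀ` as minus
the backward one, so `A (subLast w) = -Aᵀ (subLast (w ∘ (· + 1)))`: the negated monodromy
`-M = -A⁻ᵀA` is the cyclic shift of `Fin (n + 1)`, and `(-M)^(n+1) = 1`. For `n = 2g` this reads
`M^(2g+1) = -1`. Then `M - 1` divides `M^(2g+1) - 1 = -2`, so `M - 1`, and with it
`A - Aᵀ = Aᵀ (M - 1)`, is invertible over `ℚ`.
-/
open Matrix

lemma isUnit_sub_one_of_pow_eq_neg_one {S : Type*} [Ring S] {x : S} {m : ℕ}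
    (h2 : IsUnit (2 : S)) (hx : x ^ m = -1) : IsUnit (x - 1) := by
  obtain ⟨u, hu⟩ := h2
  have hgeom : x ^ m - 1 = -u := by rw [hx, hu, ← one_add_one_eq_two]; abel
  refine isUnit_iff_exists_and_exists.mpr ⟨⟨(∑ i ∈ Finset.range m, x ^ i) * -↑u⁻¹, ?_⟩,
    ⟨-↑u⁻¹ * ∑ i ∈ Finset.range m, x ^ i, ?_⟩⟩
  · rw [← mul_assoc, mul_geom_sum, hgeom, neg_mul_neg, Units.mul_inv]
  · rw [mul_assoc, geom_sum_mul, hgeom, neg_mul_neg, Units.inv_mul]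

variable {R : Type*} [CommRing R] {n : ℕ}

variable (R n) in
def seifertMatrix : Matrix (Fin n) (Fin n) R :=
  of fun i j => if i = j then -1 else if i.val + 1 = j.val then 1 else 0

noncomputable def monodromy {ι : Type*} [Fintype ι] [DecidableEq ι] (A : Matrix ι ι R) :
    Matrix ι ι R :=
  Aᵀ⁻¹ * A

lemma transpose_mul_monodromy {ι : Type*} [Fintype ι] [DecidableEq ι] {A : Matrix ι ι R}
    (hA : IsUnit A.det) : Aᵀ * monodromy A = A := by
  rw [monodromy, ← Matrix.mul_assoc, mul_nonsing_inv _ (by rwa [det_transpose]), Matrix.one_mul]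

def subLast (w : Fin (n + 1) → R) : Fin n → R :=
  fun i => w i.castSucc - w (Fin.last n)

lemma subLast_snoc_zero (v : Fin n → R) : subLast (Fin.snoc v 0) = v := by
  ext i
  simp [subLast]

lemma seifertMatrix_apply (i j : Fin n) :
    seifertMatrix R n i j = (if i.succ = j.castSucc then 1 else 0) - if i = j then 1 else 0 := by
  simp only [seifertMatrix, of_apply, Fin.ext_iff, Fin.val_succ, Fin.val_castSucc]
  split_ifs <;> first | ring1 | (exfalso; omega)

lemma det_seifertMatrix : (seifertMatrix R n).det = (-1) ^ n := by
  rw [det_of_isUpperTriangular]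
  · simp [seifertMatrix]
  · intro i j (hji : j < i)
    simp only [seifertMatrix, of_apply]
    rw [if_neg (by omega), if_neg (by omega)]

lemma isUnit_det_seifertMatrix : IsUnit (seifertMatrix R n).det := by
  rw [det_seifertMatrix]
  exact isUnit_neg_one.pow n

lemma seifertMatrix_mulVec_subLast_apply (w : Fin (n + 1) → R) (i : Fin n) :
    (seifertMatrix R n *ᵥ subLast w) i = w i.succ - w i.castSucc := by
  let F : Fin (n + 1) → R := fun k =>
    ((if i.succ = k then 1 else 0) - if i.castSucc = k then 1 else 0) * (w k - w (Fin.last n))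
  calc (seifertMatrix R n *ᵥ subLast w) i = ∑ j : Fin n, F j.castSucc := by
        simp [mulVec, dotProduct, seifertMatrix_apply, subLast, F]
    _ = ∑ k, F k - F (Fin.last n) := by rw [Fin.sum_univ_castSucc]; ring
    _ = w i.succ - w i.castSucc := by
        simp [F, sub_mul, Finset.sum_sub_distrib, ite_mul]

lemma seifertMatrix_transpose_mulVec_subLast_apply (w : Fin (n + 1) → R) (i : Fin n) :
    ((seifertMatrix R n)ᵀ *ᵥ subLast (fun k => w (k + 1))) i = w i.castSucc - w i.succ := by
  let F : Fin (n + 1) → R := fun k =>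
    ((if k = i.castSucc then 1 else 0) - if k = i.succ then 1 else 0) * (w k - w 0)
  calc ((seifertMatrix R n)ᵀ *ᵥ subLast (fun k => w (k + 1))) i = ∑ j : Fin n, F j.succ := by
        simp [mulVec, dotProduct, seifertMatrix_apply, subLast, F, Fin.coeSucc_eq_succ]
    _ = ∑ k, F k - F 0 := by rw [Fin.sum_univ_succ]; ring
    _ = w i.castSucc - w i.succ := by
        simp [F, sub_mul, Finset.sum_sub_distrib, ite_mul]

lemma seifertMatrix_mulVec_subLast (w : Fin (n + 1) → R) :
    seifertMatrix R n *ᵥ subLast w = (seifertMatrix R n)ᵀ *ᵥ -subLast (fun k => w (k + 1)) := by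
  ext i
  rw [mulVec_neg, Pi.neg_apply, seifertMatrix_mulVec_subLast_apply,
    seifertMatrix_transpose_mulVec_subLast_apply, neg_sub]

lemma neg_monodromy_mulVec_subLast (w : Fin (n + 1) → R) :
    -monodromy (seifertMatrix R n) *ᵥ subLast w = subLast (fun k => w (k + 1)) := by
  have hAt : IsUnit (seifertMatrix R n)ᵀ.det := by
    rw [det_transpose]; exact isUnit_det_seifertMatrix
  rw [neg_mulVec, monodromy, ← mulVec_mulVec, seifertMatrix_mulVec_subLast, mulVec_mulVec,
    nonsing_inv_mul _ hAt, one_mulVec, neg_neg]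

open Fin.NatCast in
lemma neg_monodromy_pow_mulVec_subLast (k : ℕ) (w : Fin (n + 1) → R) :
    (-monodromy (seifertMatrix R n)) ^ k *ᵥ subLast w =
      subLast (fun j => w (j + (k : Fin (n + 1)))) := by
  induction k generalizing w with
  | zero => simp
  | succ k ih =>
    rw [pow_succ, ← mulVec_mulVec, neg_monodromy_mulVec_subLast, ih]
    simp only [Nat.cast_succ, add_assoc]

lemma neg_monodromy_pow_succ : (-monodromy (seifertMatrix R n)) ^ (n + 1) = 1 := by
  refine ext_of_mulVec_single fun i => ?_
  rw [← subLast_snoc_zero (Pi.single i 1), neg_monodromy_pow_mulVec_subLast, one_mulVec]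
  simp only [Fin.natCast_self, add_zero]

lemma monodromy_pow_eq_neg_one (g : ℕ) :
    monodromy (seifertMatrix R (2 * g)) ^ (2 * g + 1) = -1 := by
  rw [← neg_neg (monodromy _), Odd.neg_pow ⟨g, rfl⟩, neg_monodromy_pow_succ]

theorem torus_knot_monodromy_periodic_general (g : ℕ)
    (A : Matrix (Fin (2 * g)) (Fin (2 * g)) ℚ)
    (hA : ∀ i j : Fin (2 * g), A i j =
      if i = j then -1 else if i.val + 1 = j.val then 1 else 0) :
    IsUnit (A - Aᵀ).det ∧ (Aᵀ⁻¹ * A) ^ (2 * (2 * g + 1)) = 1 := by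
  obtain rfl : A = seifertMatrix ℚ (2 * g) := ext fun i j => hA i j
  set A := seifertMatrix ℚ (2 * g)
  have hM := monodromy_pow_eq_neg_one (R := ℚ) g
  have h2 : IsUnit (2 : Matrix (Fin (2 * g)) (Fin (2 * g)) ℚ) := by
    simpa only [map_ofNat] using
      (isUnit_of_invertible (2 : ℚ)).map (algebraMap ℚ (Matrix (Fin (2 * g)) (Fin (2 * g)) ℚ))
  constructor
  · have hsplit : A - Aᵀ = Aᵀ * (monodromy A - 1) := by
      rw [mul_sub_one, transpose_mul_monodromy isUnit_det_seifertMatrix]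
    rw [hsplit, det_mul, det_transpose]
    exact isUnit_det_seifertMatrix.mul
      ((isUnit_iff_isUnit_det _).mp (isUnit_sub_one_of_pow_eq_neg_one h2 hM))
  · rw [pow_mul']
    change (monodromy A ^ (2 * g + 1)) ^ 2 = 1
    rw [hM, neg_one_sq]

/-- For the `2g × 2g` Seifert matrix `A` of the torus knot `T(2, 2g+1)` (with `−1` on the
diagonal and `1` on the superdiagonal), `A − Aᵀ` is invertible and the homological
monodromy `M = A⁻ᵀ A` satisfies `M^(2(2g+1)) = 1`, i.e. `M` is periodic. -/
theorem torus_knot_monodromy_periodic (g : ℕ) (hg : 1 ≤ g)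
    (A : Matrix (Fin (2 * g)) (Fin (2 * g)) ℚ)
    (hA : ∀ i j : Fin (2 * g), A i j =
      if i = j then -1 else if i.val + 1 = j.val then 1 else 0) :
    IsUnit (A - Aᵀ).det ∧ (Aᵀ⁻¹ * A) ^ (2 * (2 * g + 1)) = 1 :=
  torus_knot_monodromy_periodic_general g A hA
end
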